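/- Let |ψ⟩_AB, |φ⟩_AB be bipartite pure states with reduced states ρ_A, σ_A, and for η ≥ 0 let W_η = sgn_η(Tr_A(|φ⟩⟨ψ|)), where sgn_η keeps only singular values exceeding η. Then |⟨φ|(id ⊗ W_η)|ψ⟩|² ≥ F(ρ_A, σ_A) − 2η·dim(B). -/

import Mathlib

open Matrix ComplexOrder

/-- The positive semidefinite square root of a matrix (junk value `0` off
positive semidefinite matrices). -/
noncomputable def msqrt {n : Type*} [Fintype n] [DecidableEq n] (A : Matrix n n ℂ) :
    Matrix n n ℂ :=
  letI := Classical.propDecidable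
  if h : A.PosSemidef then
    (h.1.eigenvectorUnitary : Matrix n n ℂ) *
      Matrix.diagonal ((↑) ∘ Real.sqrt ∘ h.1.eigenvalues) *
      (star h.1.eigenvectorUnitary : Matrix n n ℂ)
  else 0

/-- The trace norm `‖X‖₁ = Tr √(XᴴX)`. -/
noncomputable def traceNorm {n : Type*} [Fintype n] [DecidableEq n] (X : Matrix n n ℂ) : ℝ :=
  (msqrt (Xᴴ * X)).trace.re

/-- The (squared) fidelity `F(ρ,σ) = ‖√ρ √σ‖₁²`. -/
noncomputable def fidelity {n : Type*} [Fintype n] [DecidableEq n] (ρ σ : Matrix n n ℂ) : ℝ :=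
  traceNorm (msqrt ρ * msqrt σ) ^ 2

/-- The trace distance `td(ρ,σ) = ‖ρ - σ‖₁ / 2`. -/
noncomputable def traceDist {n : Type*} [Fintype n] [DecidableEq n] (ρ σ : Matrix n n ℂ) : ℝ :=
  traceNorm (ρ - σ) / 2

/-- The outer product `|u⟩⟨v|`. -/
noncomputable def outer {n : Type*} (u v : n → ℂ) : Matrix n n ℂ :=
  Matrix.of fun i j => u i * (starRingEnd ℂ) (v j)

/-- Partial trace over the first tensor factor. -/
noncomputable def ptrFst {α β : Type*} [Fintype α] (M : Matrix (α × β) (α × β) ℂ) : Matrix β β ℂ :=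
  Matrix.of fun b b' => ∑ a, M (a, b) (a, b')

/-- Partial trace over the second tensor factor. -/
noncomputable def ptrSnd {α β : Type*} [Fintype β] (M : Matrix (α × β) (α × β) ℂ) : Matrix α α ℂ :=
  Matrix.of fun a a' => ∑ b, M (a, b) (a', b)

/-- Functional calculus for Hermitian matrices: apply `f` to the eigenvalues
(junk value `0` off Hermitian matrices). -/
noncomputable def hfun {n : Type*} [Fintype n] [DecidableEq n]
    (A : Matrix n n ℂ) (f : ℝ → ℝ) : Matrix n n ℂ :=
  letI := Classical.propDecidable
  if h : A.IsHermitian then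
    (h.eigenvectorUnitary : Matrix n n ℂ) *
      Matrix.diagonal (fun i => (f (h.eigenvalues i) : ℂ)) *
      (star h.eigenvectorUnitary : Matrix n n ℂ)
  else 0

/-- `sgnCutoff η K` is `sgn_η(K) = U sgn_η(Σ) V†` for a singular value
decomposition `K = U Σ V†`, where `sgn_η` sends singular values `> η` to `1` and
all other singular values to `0`.  Equivalently, `sgn_η(K) = K · g_η(√(KᴴK))`
where `g_η(x) = x⁻¹` for `x > η` and `g_η(x) = 0` otherwise. -/
noncomputable def sgnCutoff {n : Type*} [Fintype n] [DecidableEq n] (η : ℝ)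
    (K : Matrix n n ℂ) : Matrix n n ℂ :=
  K * hfun (msqrt (Kᴴ * K)) (fun x => if η < x then x⁻¹ else 0)

/-!
Write `K = Tr_A |φ⟩⟨ψ|` and let `s_i` be its singular values. If `M`, `N` are the coefficient
matrices of `ψ`, `φ`, then `ρ_A = M M†`, `σ_A = N N†` and `K = (M† N)ᵀ`, and both `‖√ρ_A √σ_A‖₁`
and `‖K‖₁` equal `Tr √(M† σ_A M)` (because `f(B†B)` and `f(BB†)` have the same trace when
`f 0 = 0`), so `F(ρ_A, σ_A) = (∑ s_i)²`. On the other hand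
`⟨φ|(id ⊗ W_η)|ψ⟩ = Tr (W_η K†) = ∑_{s_i > η} s_i`. Every `W_η` is a contraction, so by
Cauchy–Schwarz (with `η = 0`) `∑ s_i ≤ 1`, and each discarded singular value is at most `η`;
hence `(∑ s_i)² - (∑_{s_i > η} s_i)² ≤ 2 η dim B`.
-/

open scoped MatrixOrder

lemma Polynomial.exists_eqOn_eval {s : Set ℝ} (hs : s.Finite) (f : ℝ → ℝ) :
    ∃ p : Polynomial ℝ, s.EqOn f (p.eval ·) :=
  ⟨Lagrange.interpolate hs.toFinset id f, fun _ hx =>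
    (Lagrange.eval_interpolate_at_node (v := id) f (Set.injOn_id _) (hs.mem_toFinset.2 hx)).symm⟩

namespace Matrix

section FunctionalCalculus

open Polynomial

variable {m n : Type*} [Fintype m] [Fintype n] [DecidableEq m] [DecidableEq n]

lemma continuousOn_spectrum (A : Matrix n n ℂ) (f : ℝ → ℝ) : ContinuousOn f (spectrum ℝ A) :=
  A.finite_real_spectrum.continuousOn f

lemma trace_cfc {A : Matrix n n ℂ} (hA : A.IsHermitian) (f : ℝ → ℝ) :
    (cfc f A).trace = ∑ i, (f (hA.eigenvalues i) : ℂ) := by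
  rw [hA.cfc_eq, IsHermitian.cfc, Unitary.conjStarAlgAut_apply, trace_mul_cycle,
    Unitary.coe_star_mul_self, one_mul, trace_diagonal]
  rfl

lemma mul_self_mul_cfc {A : Matrix n n ℂ} (hA : A.IsHermitian) (f : ℝ → ℝ) :
    A * A * cfc f A = cfc (fun x => x * x * f x) A := by
  rw [cfc_mul _ _ A (continuousOn_spectrum A _) (continuousOn_spectrum A _),
    cfc_mul _ _ A (continuousOn_spectrum A _) (continuousOn_spectrum A _),
    cfc_id' ℝ A hA.isSelfAdjoint]

lemma cfc_eq_aeval_of_eqOn {A : Matrix n n ℂ} (hA : A.IsHermitian) {f : ℝ → ℝ} {p : ℝ[X]}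
    (hp : (spectrum ℝ A).EqOn f (p.eval ·)) : cfc f A = aeval A p := by
  rw [cfc_congr hp, cfc_polynomial p A hA.isSelfAdjoint]

lemma aeval_transpose (A : Matrix n n ℂ) (p : ℝ[X]) : aeval Aᵀ p = (aeval A p)ᵀ := by
  simp [aeval_eq_sum_range, transpose_sum, transpose_pow]

lemma mul_aeval_conjTranspose_mul_self (B : Matrix m n ℂ) (p : ℝ[X]) :
    B * aeval (Bᴴ * B) p = aeval (B * Bᴴ) p * B := by
  have hpow (k : ℕ) : B * (Bᴴ * B) ^ k = (B * Bᴴ) ^ k * B := by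
    induction k with
    | zero => simp
    | succ k ih =>
      rw [pow_succ, pow_succ, ← Matrix.mul_assoc, ih]
      simp only [Matrix.mul_assoc]
  simp only [aeval_eq_sum_range, Matrix.mul_sum, Matrix.sum_mul, Matrix.mul_smul, Matrix.smul_mul,
    hpow]

lemma trace_cfc_transpose {A : Matrix n n ℂ} (hA : A.IsHermitian) (f : ℝ → ℝ) :
    (cfc f Aᵀ).trace = (cfc f A).trace := by
  obtain ⟨p, hp⟩ := exists_eqOn_eval (Aᵀ.finite_real_spectrum.union A.finite_real_spectrum) f
  rw [cfc_eq_aeval_of_eqOn hA.transpose (hp.mono Set.subset_union_left),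
    cfc_eq_aeval_of_eqOn hA (hp.mono Set.subset_union_right), aeval_transpose, trace_transpose]

lemma trace_cfc_conjTranspose_mul_self (B : Matrix m n ℂ) {f : ℝ → ℝ} (hf : f 0 = 0) :
    (cfc f (Bᴴ * B)).trace = (cfc f (B * Bᴴ)).trace := by
  obtain ⟨p, hp⟩ := exists_eqOn_eval
    (((Bᴴ * B).finite_real_spectrum.union (B * Bᴴ).finite_real_spectrum).insert 0) f
  obtain ⟨q, rfl⟩ : X ∣ p := by
    rw [X_dvd_iff, coeff_zero_eq_eval_zero]
    exact (hp (Set.mem_insert 0 _)).symm.trans hf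
  rw [cfc_eq_aeval_of_eqOn (isHermitian_conjTranspose_mul_self B)
      (hp.mono (Set.subset_union_left.trans (Set.subset_insert 0 _))),
    cfc_eq_aeval_of_eqOn (isHermitian_mul_conjTranspose_self B)
      (hp.mono (Set.subset_union_right.trans (Set.subset_insert 0 _))),
    map_mul, map_mul, aeval_X, aeval_X, Matrix.mul_assoc, mul_aeval_conjTranspose_mul_self,
    trace_mul_comm, Matrix.mul_assoc, trace_mul_comm]

end FunctionalCalculus

section Contraction

variable {m n : Type*} [Fintype m] [Fintype n]

lemma star_dotProduct_self_eq_norm_sq (v : n → ℂ) :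
    star v ⬝ᵥ v = ((‖WithLp.toLp 2 v‖ ^ 2 : ℝ) : ℂ) := by
  rw [dotProduct_comm, ← EuclideanSpace.inner_toLp_toLp, inner_self_eq_norm_sq_to_K]
  push_cast
  rfl

lemma norm_toLp_mulVec_le [DecidableEq n] {U : Matrix m n ℂ} (hU : (1 - Uᴴ * U).PosSemidef)
    (v : n → ℂ) : ‖WithLp.toLp 2 (U *ᵥ v)‖ ≤ ‖WithLp.toLp 2 v‖ := by
  have h := hU.dotProduct_mulVec_nonneg v
  rw [sub_mulVec, dotProduct_sub, one_mulVec, ← mulVec_mulVec, dotProduct_mulVec, ← star_mulVec,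
    sub_nonneg, star_dotProduct_self_eq_norm_sq, star_dotProduct_self_eq_norm_sq,
    Complex.real_le_real] at h
  exact (pow_le_pow_iff_left₀ (norm_nonneg _) (norm_nonneg _) two_ne_zero).1 h

lemma norm_star_dotProduct_mulVec_le [DecidableEq n] {U : Matrix m n ℂ}
    (hU : (1 - Uᴴ * U).PosSemidef) (u : m → ℂ) (v : n → ℂ) :
    ‖star u ⬝ᵥ (U *ᵥ v)‖ ≤ ‖WithLp.toLp 2 u‖ * ‖WithLp.toLp 2 v‖ := by
  rw [dotProduct_comm, ← EuclideanSpace.inner_toLp_toLp]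
  exact (norm_inner_le_norm _ _).trans
    (mul_le_mul_of_nonneg_left (norm_toLp_mulVec_le hU v) (norm_nonneg _))

open Kronecker in
lemma posSemidef_one_sub_conjTranspose_one_kronecker_mul_self [DecidableEq m] [DecidableEq n]
    {W : Matrix n n ℂ} (hW : (1 - Wᴴ * W).PosSemidef) :
    (1 - ((1 : Matrix m m ℂ) ⊗ₖ W)ᴴ * ((1 : Matrix m m ℂ) ⊗ₖ W)).PosSemidef := by
  have h : (1 : Matrix m m ℂ) ⊗ₖ (1 - Wᴴ * W) = 1 - (1 : Matrix m m ℂ) ⊗ₖ (Wᴴ * W) := by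
    rw [eq_sub_iff_add_eq, ← kronecker_add, sub_add_cancel, one_kronecker_one]
  rw [conjTranspose_kronecker, conjTranspose_one, ← mul_kronecker_mul, one_mul, ← h]
  exact PosSemidef.one.kronecker hW

end Contraction

end Matrix

section SquareRoot

variable {n : Type*} [Fintype n] [DecidableEq n]

-- `hfun` and `msqrt` build their diagonal with classical decidable equality, hence the `congr!`.
lemma hfun_eq_cfc {A : Matrix n n ℂ} (hA : A.IsHermitian) (f : ℝ → ℝ) : hfun A f = cfc f A := by
  rw [hA.cfc_eq, Matrix.IsHermitian.cfc, Unitary.conjStarAlgAut_apply, hfun, dif_pos hA]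
  congr 2
  ext i j
  simp only [diagonal_apply, Function.comp_apply]
  congr!

lemma msqrt_eq_cfc {A : Matrix n n ℂ} (hA : A.PosSemidef) : msqrt A = cfc Real.sqrt A := by
  rw [hA.1.cfc_eq, Matrix.IsHermitian.cfc, Unitary.conjStarAlgAut_apply, msqrt, dif_pos hA]
  congr 2
  ext i j
  simp only [diagonal_apply, Function.comp_apply]
  congr!

lemma msqrt_eq_sqrt {A : Matrix n n ℂ} (hA : A.PosSemidef) : msqrt A = CFC.sqrt A := by
  rw [CFC.sqrt_eq_real_sqrt A hA.nonneg, cfcₙ_eq_cfc, msqrt_eq_cfc hA]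

lemma posSemidef_msqrt {A : Matrix n n ℂ} (hA : A.PosSemidef) : (msqrt A).PosSemidef := by
  rw [msqrt_eq_sqrt hA]
  exact (CFC.sqrt_nonneg A).posSemidef

lemma msqrt_mul_self {A : Matrix n n ℂ} (hA : A.PosSemidef) : msqrt A * msqrt A = A := by
  rw [msqrt_eq_sqrt hA]
  exact CFC.sqrt_mul_sqrt_self A hA.nonneg

lemma isHermitian_msqrt_conjTranspose_mul_self (K : Matrix n n ℂ) :
    (msqrt (Kᴴ * K)).IsHermitian :=
  (posSemidef_msqrt (posSemidef_conjTranspose_mul_self K)).1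

end SquareRoot

section TraceNorm

variable {m n : Type*} [Fintype m] [Fintype n] [DecidableEq m] [DecidableEq n]

lemma traceNorm_eq_re_trace_cfc (X : Matrix n n ℂ) :
    traceNorm X = (cfc Real.sqrt (Xᴴ * X)).trace.re := by
  rw [traceNorm, msqrt_eq_cfc (posSemidef_conjTranspose_mul_self X)]

lemma traceNorm_eq_re_trace_cfc_mul_conjTranspose (X : Matrix n n ℂ) :
    traceNorm X = (cfc Real.sqrt (X * Xᴴ)).trace.re := by
  rw [traceNorm_eq_re_trace_cfc, trace_cfc_conjTranspose_mul_self X Real.sqrt_zero]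

lemma traceNorm_transpose (X : Matrix n n ℂ) : traceNorm Xᵀ = traceNorm X := by
  rw [traceNorm_eq_re_trace_cfc, conjTranspose_transpose_eq_transpose_conjTranspose,
    ← transpose_mul, trace_cfc_transpose (isHermitian_mul_conjTranspose_self X),
    traceNorm_eq_re_trace_cfc_mul_conjTranspose]

-- Both sides are `(Tr √(M† N N† M))²`.
lemma fidelity_mul_conjTranspose (M N : Matrix n m ℂ) :
    fidelity (M * Mᴴ) (N * Nᴴ) = traceNorm (Mᴴ * N) ^ 2 := by
  have hρ := posSemidef_self_mul_conjTranspose M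
  have hσ := posSemidef_self_mul_conjTranspose N
  set Sρ := msqrt (M * Mᴴ)
  set Sσ := msqrt (N * Nᴴ)
  have hSρ : Sρᴴ = Sρ := (posSemidef_msqrt hρ).1
  have hSσ : Sσᴴ = Sσ := (posSemidef_msqrt hσ).1
  have h₁ : (Sρ * Sσ)ᴴ * (Sρ * Sσ) = (Mᴴ * Sσ)ᴴ * (Mᴴ * Sσ) := by
    rw [conjTranspose_mul, conjTranspose_mul, hSρ, hSσ, conjTranspose_conjTranspose,
      mul_assoc, ← mul_assoc Sρ, msqrt_mul_self hρ]
    simp only [Matrix.mul_assoc]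
  have h₂ : (Mᴴ * Sσ) * (Mᴴ * Sσ)ᴴ = (Mᴴ * N) * (Mᴴ * N)ᴴ := by
    rw [conjTranspose_mul, conjTranspose_mul, hSσ, conjTranspose_conjTranspose, Matrix.mul_assoc,
      ← Matrix.mul_assoc Sσ, msqrt_mul_self hσ]
    simp only [Matrix.mul_assoc]
  rw [fidelity, traceNorm_eq_re_trace_cfc, h₁, trace_cfc_conjTranspose_mul_self _ Real.sqrt_zero,
    h₂, ← traceNorm_eq_re_trace_cfc_mul_conjTranspose]

end TraceNorm

noncomputable def singularValues {n : Type*} [Fintype n] [DecidableEq n] (K : Matrix n n ℂ) :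
    n → ℝ :=
  (isHermitian_msqrt_conjTranspose_mul_self K).eigenvalues

section SingularValues

variable {n : Type*} [Fintype n] [DecidableEq n] (K : Matrix n n ℂ)

lemma singularValues_nonneg (i : n) : 0 ≤ singularValues K i :=
  (posSemidef_msqrt (posSemidef_conjTranspose_mul_self K)).eigenvalues_nonneg i

lemma traceNorm_eq_sum_singularValues : traceNorm K = ∑ i, singularValues K i := by
  rw [traceNorm, (isHermitian_msqrt_conjTranspose_mul_self K).trace_eq_sum_eigenvalues]
  simp [singularValues]

lemma sgnCutoff_eq_mul_cfc (η : ℝ) :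
    sgnCutoff η K = K * cfc (fun x => if η < x then x⁻¹ else 0) (msqrt (Kᴴ * K)) := by
  rw [sgnCutoff, hfun_eq_cfc (isHermitian_msqrt_conjTranspose_mul_self K)]

lemma conjTranspose_mul_self_mul_cfc_msqrt (f : ℝ → ℝ) :
    Kᴴ * K * cfc f (msqrt (Kᴴ * K)) = cfc (fun x => x * x * f x) (msqrt (Kᴴ * K)) := by
  have h := mul_self_mul_cfc (isHermitian_msqrt_conjTranspose_mul_self K) f
  rwa [msqrt_mul_self (posSemidef_conjTranspose_mul_self K)] at h

lemma trace_sgnCutoff_mul_conjTranspose (η : ℝ) :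
    (sgnCutoff η K * Kᴴ).trace =
      ((∑ i, if η < singularValues K i then singularValues K i else 0 : ℝ) : ℂ) := by
  rw [sgnCutoff_eq_mul_cfc, trace_mul_cycle, conjTranspose_mul_self_mul_cfc_msqrt,
    trace_cfc (isHermitian_msqrt_conjTranspose_mul_self K), Complex.ofReal_sum, singularValues]
  refine Finset.sum_congr rfl fun i _ => ?_
  split_ifs <;> simp [mul_self_mul_inv]

lemma posSemidef_one_sub_conjTranspose_sgnCutoff_mul_self (η : ℝ) :
    (1 - (sgnCutoff η K)ᴴ * sgnCutoff η K).PosSemidef := by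
  set g : ℝ → ℝ := fun x => if η < x then x⁻¹ else 0
  set P := msqrt (Kᴴ * K)
  have hg : (cfc g P)ᴴ = cfc g P := (IsSelfAdjoint.cfc (f := g) (a := P)).star_eq
  have hW : (sgnCutoff η K)ᴴ * sgnCutoff η K = cfc (fun x => g x * (x * x * g x)) P := by
    rw [sgnCutoff_eq_mul_cfc, conjTranspose_mul, hg, Matrix.mul_assoc, ← Matrix.mul_assoc Kᴴ,
      conjTranspose_mul_self_mul_cfc_msqrt,
      ← cfc_mul _ _ P (continuousOn_spectrum P _) (continuousOn_spectrum P _)]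
  rw [hW, ← cfc_const_one ℝ P (isHermitian_msqrt_conjTranspose_mul_self K).isSelfAdjoint,
    ← cfc_sub _ _ P (continuousOn_spectrum P _) (continuousOn_spectrum P _),
    ← nonneg_iff_posSemidef]
  refine cfc_nonneg fun x _ => ?_
  by_cases hx : x = 0 <;> by_cases hηx : η < x <;> simp [g, hx, hηx]

end SingularValues

lemma norm_toLp_eq_one {ι : Type*} [Fintype ι] {v : ι → ℂ} (hv : ∑ i, ‖v i‖ ^ 2 = 1) :
    ‖WithLp.toLp 2 v‖ = 1 := by
  simp [EuclideanSpace.norm_eq, hv]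

section Bipartite

variable {α β : Type*}

def coeffMatrix (ψ : α × β → ℂ) : Matrix α β ℂ := Matrix.of (Function.curry ψ)

lemma ptrSnd_outer_self [Fintype β] (ψ : α × β → ℂ) :
    ptrSnd (outer ψ ψ) = coeffMatrix ψ * (coeffMatrix ψ)ᴴ := by
  ext a a'
  simp [ptrSnd, outer, coeffMatrix, mul_apply]

lemma ptrFst_outer [Fintype α] (φ ψ : α × β → ℂ) :
    ptrFst (outer φ ψ) = ((coeffMatrix ψ)ᴴ * coeffMatrix φ)ᵀ := by
  ext b b'
  simp [ptrFst, outer, coeffMatrix, mul_apply, mul_comm]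

variable [Fintype α] [Fintype β] [DecidableEq α]

lemma fidelity_ptrSnd_outer [DecidableEq β] (ψ φ : α × β → ℂ) :
    fidelity (ptrSnd (outer ψ ψ)) (ptrSnd (outer φ φ)) = traceNorm (ptrFst (outer φ ψ)) ^ 2 := by
  rw [ptrSnd_outer_self, ptrSnd_outer_self, fidelity_mul_conjTranspose, ptrFst_outer,
    traceNorm_transpose]

open Kronecker

lemma star_dotProduct_one_kronecker_mulVec (φ ψ : α × β → ℂ) (W : Matrix β β ℂ) :
    star φ ⬝ᵥ (((1 : Matrix α α ℂ) ⊗ₖ W) *ᵥ ψ) = (W * (ptrFst (outer φ ψ))ᴴ).trace := by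
  simp only [dotProduct, Pi.star_apply, RCLike.star_def, mulVec, kroneckerMap_apply, one_apply,
    ite_mul, one_mul, zero_mul, Fintype.sum_prod_type, Finset.sum_ite_irrel, Finset.sum_const_zero,
    Finset.sum_ite_eq, Finset.mem_univ, ↓reduceIte, Finset.mul_sum, trace, ptrFst, outer, of_apply,
    diag_apply, mul_apply, conjTranspose_apply, star_sum, star_mul', RingHomCompTriple.comp_apply,
    RingHom.id_apply]
  rw [Finset.sum_comm]
  refine Finset.sum_congr rfl fun b _ => ?_
  rw [Finset.sum_comm]
  exact Finset.sum_congr rfl fun b' _ => Finset.sum_congr rfl fun a _ => by ring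

lemma star_dotProduct_one_kronecker_sgnCutoff_mulVec [DecidableEq β] (φ ψ : α × β → ℂ) (η : ℝ) :
    star φ ⬝ᵥ (((1 : Matrix α α ℂ) ⊗ₖ sgnCutoff η (ptrFst (outer φ ψ))) *ᵥ ψ) =
      ((∑ i, if η < singularValues (ptrFst (outer φ ψ)) i
        then singularValues (ptrFst (outer φ ψ)) i else 0 : ℝ) : ℂ) := by
  rw [star_dotProduct_one_kronecker_mulVec, trace_sgnCutoff_mul_conjTranspose]

lemma traceNorm_ptrFst_outer_le_one [DecidableEq β] {ψ φ : α × β → ℂ}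
    (hψ : ∑ x, ‖ψ x‖ ^ 2 = 1) (hφ : ∑ x, ‖φ x‖ ^ 2 = 1) :
    traceNorm (ptrFst (outer φ ψ)) ≤ 1 := by
  set K := ptrFst (outer φ ψ)
  have h := norm_star_dotProduct_mulVec_le (posSemidef_one_sub_conjTranspose_one_kronecker_mul_self
    (m := α) (posSemidef_one_sub_conjTranspose_sgnCutoff_mul_self K 0)) φ ψ
  rw [star_dotProduct_one_kronecker_sgnCutoff_mulVec, norm_toLp_eq_one hφ, norm_toLp_eq_one hψ,
    one_mul, Complex.norm_real, Real.norm_eq_abs] at h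
  calc traceNorm K = ∑ i, singularValues K i := traceNorm_eq_sum_singularValues K
    _ = ∑ i, if 0 < singularValues K i then singularValues K i else 0 :=
      Finset.sum_congr rfl fun i _ => (ite_eq_left_iff.2 fun hi =>
        (le_antisymm (not_lt.1 hi) (singularValues_nonneg K i)).symm).symm
    _ ≤ 1 := (le_abs_self _).trans h

end Bipartite

lemma sq_sum_sub_le_sq_sum_ite {ι : Type*} [Fintype ι] {s : ι → ℝ} (hs : ∀ i, 0 ≤ s i)
    (hs₁ : ∑ i, s i ≤ 1) {η : ℝ} (hη : 0 ≤ η) :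
    (∑ i, s i) ^ 2 - 2 * η * Fintype.card ι ≤ (∑ i, if η < s i then s i else 0) ^ 2 := by
  set T := ∑ i, if η < s i then s i else 0
  have hT : 0 ≤ T := Finset.sum_nonneg fun i _ => by split_ifs <;> simp [hs i]
  have hTS : T ≤ ∑ i, s i := Finset.sum_le_sum fun i _ => by split_ifs <;> simp [hs i]
  have hST : ∑ i, s i - T ≤ η * Fintype.card ι := by
    rw [← Finset.sum_sub_distrib, mul_comm, ← nsmul_eq_mul, ← Finset.card_univ]
    refine Finset.sum_le_card_nsmul _ _ _ fun i _ => ?_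
    split_ifs with h
    · simpa using hη
    · simpa using not_lt.1 h
  nlinarith [mul_le_mul hST (show ∑ i, s i + T ≤ 2 by linarith) (by linarith) (by positivity)]

open Kronecker in
/-- The canonical Uhlmann partial isometry with cutoff `η ≥ 0`,
`W_η = sgn_η(Tr_A(|φ⟩⟨ψ|))`, approximately achieves the fidelity:
`|⟨φ|(id ⊗ W_η)|ψ⟩|² ≥ F(ρ_A, σ_A) − 2η·dim(B)`. -/
theorem canonical_uhlmann_cutoff {α β : Type*}
    [Fintype α] [Fintype β] [DecidableEq α] [DecidableEq β]
    (ψ φ : α × β → ℂ)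
    (hψ : ∑ x, ‖ψ x‖ ^ 2 = 1) (hφ : ∑ x, ‖φ x‖ ^ 2 = 1)
    (η : ℝ) (hη : 0 ≤ η)
    (W : Matrix β β ℂ) (hW : W = sgnCutoff η (ptrFst (outer φ ψ))) :
    fidelity (ptrSnd (outer ψ ψ)) (ptrSnd (outer φ φ)) - 2 * η * (Fintype.card β : ℝ) ≤
      ‖star φ ⬝ᵥ (((1 : Matrix α α ℂ) ⊗ₖ W) *ᵥ ψ)‖ ^ 2 := by
  have hK := traceNorm_ptrFst_outer_le_one hψ hφ
  rw [traceNorm_eq_sum_singularValues] at hK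
  rw [hW, fidelity_ptrSnd_outer, star_dotProduct_one_kronecker_sgnCutoff_mulVec, Complex.norm_real,
    Real.norm_eq_abs, sq_abs, traceNorm_eq_sum_singularValues]
  exact sq_sum_sub_le_sq_sum_ite (singularValues_nonneg _) hK hη
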